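/- For every n×n complex matrix V, |Per(V)| ≤ ‖V‖^n. -/

import Mathlib

/-- The permanent of an `n×n` complex matrix: `Per(A) = ∑_{σ ∈ S_n} ∏_i A i (σ i)`. -/
noncomputable def perm {n : ℕ} (A : Matrix (Fin n) (Fin n) ℂ) : ℂ :=
  ∑ σ : Equiv.Perm (Fin n), ∏ i, A i (σ i)

/-- The ℓ²→ℓ² operator norm of a complex square matrix (its largest singular value). -/
noncomputable def opNorm {n : ℕ} (A : Matrix (Fin n) (Fin n) ℂ) : ℝ :=
  ‖Matrix.toEuclideanCLM (𝕜 := ℂ) A‖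

/-!
Glynn's formula writes `2ⁿ Per(V)` as a signed sum, over the `2ⁿ` sign vectors `δ ∈ {±1}ⁿ`, of
`∏ᵢ δᵢ · ∏ᵢ (Vδ)ᵢ`. As `‖δ‖² = n`, the squared moduli of the entries of `Vδ` sum to at most
`n ‖V‖²`, so by AM-GM their product is at most `‖V‖ⁿ`; averaging over the `δ` gives the bound.
-/

open Finset Function Matrix

def signOf {R : Type*} [Ring R] (b : Bool) : R := if b then 1 else -1

theorem norm_signOf {R : Type*} [NormedRing R] [NormOneClass R] (b : Bool) :
    ‖(signOf b : R)‖ = 1 := by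
  cases b <;> simp [signOf]

theorem sum_signOf_pow {R : Type*} [Ring R] (k : ℕ) :
    ∑ b : Bool, (signOf b : R) ^ k = if Even k then 2 else 0 := by
  rcases Nat.even_or_odd k with h | h
  · simp [signOf, h, h.neg_one_pow, one_add_one_eq_two]
  · simp [signOf, h.neg_one_pow, Nat.not_even_iff_odd.2 h]

theorem Function.bijective_iff_forall_odd_card_fiber {ι : Type*} [Fintype ι] [DecidableEq ι]
    {f : ι → ι} : Bijective f ↔ ∀ j, Odd #{i | f i = j} := by
  refine ⟨fun hf j ↦ ?_, fun hodd ↦ Finite.surjective_iff_bijective.1 fun j ↦ ?_⟩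
  · obtain ⟨i, rfl⟩ := hf.surjective j
    have : ({i' | f i' = f i} : Finset ι) = {i} := by
      ext i'
      simp [hf.injective.eq_iff]
    simp [this]
  · obtain ⟨i, hi⟩ := card_pos.1 (hodd j).pos
    exact ⟨i, (mem_filter.1 hi).2⟩

theorem Fintype.sum_ite_bijective {ι M : Type*} [Fintype ι] [DecidableEq ι] [AddCommMonoid M]
    (g : (ι → ι) → M) :
    ∑ f : ι → ι, (if Bijective f then g f else 0) = ∑ σ : Equiv.Perm ι, g σ := by
  rw [← sum_filter, ← Fintype.sum_equiv Equiv.bijectiveEquiv (fun f ↦ g f) _ (fun _ ↦ rfl)]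
  exact sum_subtype _ (by simp) g

section Glynn

variable {R ι : Type*} [CommRing R] [Fintype ι] [DecidableEq ι]

/-- The summand factors over the fibres of `f`, and the fibre over `j` contributes
`∑ b, signOf b ^ (#f⁻¹{j} + 1)`, which vanishes unless that fibre has odd size. -/
theorem sum_prod_signOf_mul_prod_signOf_comp (f : ι → ι) :
    ∑ δ : ι → Bool, (∏ i, (signOf (δ i) : R)) * ∏ i, signOf (δ (f i)) =
      if Bijective f then 2 ^ Fintype.card ι else 0 := by
  have hfiber (δ : ι → Bool) : (∏ i, (signOf (δ i) : R)) * ∏ i, signOf (δ (f i)) =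
      ∏ j, signOf (δ j) ^ (#{i | f i = j} + 1) := by
    rw [← prod_fiberwise' univ f (fun j ↦ (signOf (δ j) : R)), ← prod_mul_distrib]
    simp [pow_succ', prod_const]
  simp_rw [hfiber, ← Fintype.prod_sum (fun j b ↦ (signOf b : R) ^ (#{i | f i = j} + 1)),
    sum_signOf_pow, Nat.even_add_one, Nat.not_even_iff_odd, Fintype.prod_ite_zero,
    prod_const, card_univ, bijective_iff_forall_odd_card_fiber]

theorem pow_card_mul_permanent_eq_sum (M : Matrix ι ι R) :
    2 ^ Fintype.card ι * M.permanent =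
      ∑ δ : ι → Bool, (∏ i, (signOf (δ i) : R)) * ∏ i, (M *ᵥ fun j ↦ signOf (δ j)) i := by
  symm
  calc ∑ δ : ι → Bool, (∏ i, (signOf (δ i) : R)) * ∏ i, (M *ᵥ fun j ↦ signOf (δ j)) i
      = ∑ f : ι → ι, (∏ i, M i (f i)) *
          ∑ δ : ι → Bool, (∏ i, (signOf (δ i) : R)) * ∏ i, signOf (δ (f i)) := by
        simp_rw [mulVec, dotProduct, Fintype.prod_sum, prod_mul_distrib, mul_sum]
        rw [sum_comm]
        exact sum_congr rfl fun f _ ↦ sum_congr rfl fun δ _ ↦ by ring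
    _ = ∑ σ : Equiv.Perm ι, 2 ^ Fintype.card ι * ∏ i, M i (σ i) := by
        simp_rw [sum_prod_signOf_mul_prod_signOf_comp, mul_ite, mul_zero, mul_comm]
        exact Fintype.sum_ite_bijective _
    _ = 2 ^ Fintype.card ι * M.permanent := by
        rw [← mul_sum, ← permanent_transpose]
        rfl

end Glynn

theorem Real.prod_le_pow_card_of_sum_le {ι : Type*} {s : Finset ι} {z : ι → ℝ} {c : ℝ}
    (hz : ∀ i ∈ s, 0 ≤ z i) (hsum : ∑ i ∈ s, z i ≤ #s * c) : ∏ i ∈ s, z i ≤ c ^ #s := by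
  rcases s.eq_empty_or_nonempty with rfl | hs
  · simp
  have hcard : (0 : ℝ) < #s := by exact_mod_cast hs.card_pos
  have hgm := Real.geom_mean_le_arith_mean s (fun _ ↦ 1) z (fun _ _ ↦ zero_le_one)
    (by simpa using hcard) hz
  simp only [Real.rpow_one, sum_const, nsmul_eq_mul, mul_one, one_mul] at hgm
  have hmean : (∏ i ∈ s, z i) ^ (#s : ℝ)⁻¹ ≤ c :=
    hgm.trans ((div_le_iff₀ hcard).2 (by linarith))
  have hprod : 0 ≤ ∏ i ∈ s, z i := prod_nonneg hz
  have hc : 0 ≤ c := (Real.rpow_nonneg hprod _).trans hmean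
  simpa using (Real.rpow_inv_le_iff_of_pos hprod hc hcard).1 hmean

section Euclidean

variable {𝕜 ι : Type*} [RCLike 𝕜] [Fintype ι]

theorem prod_norm_apply_le_opNorm_pow (T : EuclideanSpace 𝕜 ι →L[𝕜] EuclideanSpace 𝕜 ι)
    {x : EuclideanSpace 𝕜 ι} (hx : ∀ i, ‖x i‖ = 1) :
    ∏ i, ‖T x i‖ ≤ ‖T‖ ^ Fintype.card ι := by
  have hnorm_x : ‖x‖ ^ 2 = Fintype.card ι := by simp [EuclideanSpace.norm_sq_eq, hx]
  have hsum : ∑ i, ‖T x i‖ ^ 2 ≤ Fintype.card ι * ‖T‖ ^ 2 :=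
    calc ∑ i, ‖T x i‖ ^ 2 = ‖T x‖ ^ 2 := (EuclideanSpace.norm_sq_eq _).symm
      _ ≤ (‖T‖ * ‖x‖) ^ 2 := by gcongr; exact T.le_opNorm x
      _ = Fintype.card ι * ‖T‖ ^ 2 := by rw [mul_pow, hnorm_x, mul_comm]
  have hsq : (∏ i, ‖T x i‖) ^ 2 ≤ (‖T‖ ^ Fintype.card ι) ^ 2 := by
    rw [← prod_pow, ← pow_mul, mul_comm, pow_mul]
    exact Real.prod_le_pow_card_of_sum_le (fun i _ ↦ by positivity) hsum
  exact (pow_le_pow_iff_left₀ (by positivity) (by positivity) two_ne_zero).1 hsq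

theorem Matrix.prod_norm_mulVec_le_opNorm_pow [DecidableEq ι] (A : Matrix ι ι 𝕜) {v : ι → 𝕜}
    (hv : ∀ i, ‖v i‖ = 1) :
    ∏ i, ‖(A *ᵥ v) i‖ ≤ ‖toEuclideanCLM (𝕜 := 𝕜) A‖ ^ Fintype.card ι :=
  prod_norm_apply_le_opNorm_pow (toEuclideanCLM (𝕜 := 𝕜) A) (x := WithLp.toLp 2 v) hv

end Euclidean

theorem perm_eq_permanent {n : ℕ} (A : Matrix (Fin n) (Fin n) ℂ) : perm A = A.permanent :=
  permanent_transpose A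

/-- `|Per(V)| ≤ ‖V‖^n` for every `n×n` complex matrix `V`. -/
theorem abs_perm_le_opNorm_pow (n : ℕ) (V : Matrix (Fin n) (Fin n) ℂ) :
    ‖perm V‖ ≤ opNorm V ^ n := by
  have hterm (δ : Fin n → Bool) :
      ‖(∏ i, (signOf (δ i) : ℂ)) * ∏ i, (V *ᵥ fun j ↦ signOf (δ j)) i‖ ≤ opNorm V ^ n := by
    simpa [norm_prod, norm_signOf, opNorm] using
      V.prod_norm_mulVec_le_opNorm_pow fun j ↦ norm_signOf (δ j)
  have h : (2 : ℝ) ^ n * ‖perm V‖ ≤ 2 ^ n * opNorm V ^ n :=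
    calc (2 : ℝ) ^ n * ‖perm V‖ = ‖(2 : ℂ) ^ Fintype.card (Fin n) * V.permanent‖ := by
          simp [perm_eq_permanent]
      _ ≤ ∑ _δ : Fin n → Bool, opNorm V ^ n := by
          rw [pow_card_mul_permanent_eq_sum]
          exact (norm_sum_le _ _).trans (sum_le_sum fun δ _ ↦ hterm δ)
      _ = 2 ^ n * opNorm V ^ n := by simp
  exact le_of_mul_le_mul_left h (by positivity)
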